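/- Let λ : 𝕋^d → ℝ be continuous with 1/D ≤ λ_b ≤ q < 1 for all b (D ≥ 1), and let L be the normalized homological operator, L h(b,x) = −Σ_{n=0}^{∞} P_n(b) h(F₀^n(b,x)). Then L is bounded in the fiberwise Lipschitz seminorm: Lip_x(Lh) ≤ (D/(1 − q²)) Lip_x h for every h Lipschitz in x. Moreover, if h(b,·) ∈ C^l([0,1]) for every b, then Lh(b,·) ∈ C^l([0,1]) with (Lh)^{(l)}(b,x) = −Σ_{n=0}^{∞} P_n(b) Π_n(b)^l h^{(l)}(F₀^n(b,x)), and ||(Lh)^{(l)}||_C ≤ (D/(1 − q^{l+1})) ||h^{(l)}||_C. -/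

import Mathlib

/-! The `n`-th term of `homOp A lam h b` is `P_n(b) h(A^n b, Π_n(b) x)`, and its `j`-th fiber
derivative is `P_n(b) Π_n(b)^j h^{(j)}(A^n b, Π_n(b) x)`. Since `Π_n ≤ q^n` and `1/λ ≤ D`,
`P_n Π_n^j ≤ D (q^{j+1})^n`, so every derived series is dominated by a geometric series of ratio
`q^{j+1}`. Termwise differentiation then gives smoothness, the formula for `(Lh)^{(l)}` and the
bound `D/(1-q^{l+1})`; the Lipschitz estimate is the same computation with `j = 1`, applied to
differences of terms. -/

open Set Function

noncomputable section

/-- The `d`-dimensional torus `ℝ^d/ℤ^d` with the (sup-)product metric. -/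
abbrev Torus (d : ℕ) := Fin d → AddCircle (1 : ℝ)

/-- The map of the torus induced by an integer matrix. -/
def inducedMap {d : ℕ} (M : Matrix (Fin d) (Fin d) ℤ) (b : Torus d) : Torus d :=
  fun i => ∑ j, M i j • b j

/-- Hyperbolicity of an integer matrix: determinant `±1` and no eigenvalue of modulus `1`. -/
def IsHyperbolic {d : ℕ} (M : Matrix (Fin d) (Fin d) ℤ) : Prop :=
  (M.det = 1 ∨ M.det = -1) ∧
  ∀ z : ℂ, ((M.map (fun n : ℤ => (n : ℂ))).charpoly).IsRoot z → ‖z‖ ≠ 1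

/-- `Π_n(b) = λ_b λ_{Ab} ⋯ λ_{A^{n-1}b}` (and `Π_0(b) = 1`). -/
def PiProd {d : ℕ} (A : Torus d → Torus d) (lam : Torus d → ℝ) (n : ℕ) (b : Torus d) : ℝ :=
  ∏ k ∈ Finset.range n, lam (A^[k] b)

/-- `P_n(b) = Π_n(b) / λ_{A^n b}`. -/
def Pfun {d : ℕ} (A : Torus d → Torus d) (lam : Torus d → ℝ) (n : ℕ) (b : Torus d) : ℝ :=
  PiProd A lam n b / lam (A^[n] b)

/-- The normalized homological operator
`Lh(b,x) = −Σ_{n≥0} P_n(b) h(F₀^n(b,x)) = −Σ_{n≥0} P_n(b) h(A^n b, Π_n(b) x)`. -/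
def homOp {d : ℕ} (A : Torus d → Torus d) (lam : Torus d → ℝ) (h : Torus d → ℝ → ℝ) :
    Torus d → ℝ → ℝ :=
  fun b x => -∑' n : ℕ, Pfun A lam n b * h (A^[n] b) (PiProd A lam n b * x)

open MeasureTheory intervalIntegral

section SeriesOnIcc

variable {ι : Type*} [Countable ι] {a b : ℝ}

/- Mathlib differentiates series termwise only on open sets; on `Icc a b` we go through the
primitive `y ↦ ∑' n, f n a + ∫ t in a..y, ∑' n, derivWithin (f n) (Icc a b) t`. -/
theorem hasDerivWithinAt_tsum_Icc (hab : a < b) {f : ι → ℝ → ℝ} {u : ℕ → ι → ℝ}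
    (hf : ∀ n, ContDiffOn ℝ 1 (f n) (Icc a b)) (hu : ∀ j ≤ 1, Summable (u j))
    (hfu : ∀ j ≤ 1, ∀ n, ∀ x ∈ Icc a b, ‖iteratedDerivWithin j (f n) (Icc a b) x‖ ≤ u j n)
    {x : ℝ} (hx : x ∈ Icc a b) :
    HasDerivWithinAt (fun y => ∑' n, f n y) (∑' n, derivWithin (f n) (Icc a b) x) (Icc a b) x := by
  set g := fun n => derivWithin (f n) (Icc a b)
  set G := fun y => ∑' n, g n y
  have hfs : ∀ y ∈ Icc a b, Summable fun n => f n y := fun y hy =>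
    (hu 0 zero_le_one).of_norm_bounded fun n => by simpa using hfu 0 zero_le_one n y hy
  have hgu : ∀ n, ∀ y ∈ Icc a b, ‖g n y‖ ≤ u 1 n := fun n y hy => by
    simpa using hfu 1 le_rfl n y hy
  have hfd : ∀ n, ∀ y ∈ Icc a b, HasDerivWithinAt (f n) (g n y) (Icc a b) y := fun n y hy =>
    ((hf n).differentiableOn one_ne_zero y hy).hasDerivWithinAt
  have hg : ∀ n, ContinuousOn (g n) (Icc a b) := fun n =>
    ((hf n).continuousOn_derivWithin (uniqueDiffOn_Icc hab) le_rfl)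
  have hG : ContinuousOn G (Icc a b) := continuousOn_tsum hg (hu 1 le_rfl) hgu
  have hprim : ∀ y ∈ Icc a b, ∑' n, f n y = ∑' n, f n a + ∫ t in a..y, G t := by
    intro y hy
    have hsub : Icc a y ⊆ Icc a b := Icc_subset_Icc_right hy.2
    have hFTC : ∀ n, ∫ t in a..y, g n t = f n y - f n a := fun n =>
      integral_eq_sub_of_hasDeriv_right_of_le hy.1 ((hf n).continuousOn.mono hsub)
        (fun t ht => ((hfd n t (hsub (Ioo_subset_Icc_self ht))).hasDerivAt
          (Icc_mem_nhds ht.1 (ht.2.trans_le hy.2))).hasDerivWithinAt)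
        ((hg n).mono (uIcc_of_le hy.1 ▸ hsub)).intervalIntegrable
    have hIoc : uIoc a y ⊆ Icc a b :=
      (uIoc_of_le hy.1).trans_subset (Ioc_subset_Icc_self.trans hsub)
    have hswap : HasSum (fun n => ∫ t in a..y, g n t) (∫ t in a..y, G t) :=
      hasSum_integral_of_dominated_convergence (fun n _ => u 1 n)
        (fun n => ((hg n).mono hIoc).aestronglyMeasurable measurableSet_uIoc)
        (fun n => ae_of_all _ fun t ht => hgu n t (hIoc ht)) (ae_of_all _ fun _ _ => hu 1 le_rfl)
        intervalIntegrable_const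
        (ae_of_all _ fun t ht => ((hu 1 le_rfl).of_norm_bounded fun n => hgu n t (hIoc ht)).hasSum)
    have hab' : a ∈ Icc a b := ⟨le_rfl, hab.le⟩
    simp only [hFTC] at hswap
    linarith [hswap.unique (((hfs y hy).hasSum.sub (hfs a hab').hasSum))]
  -- enables the instance `FTCFilter.nhdsIcc` used by `integral_hasDerivWithinAt_right`
  have : Fact (x ∈ Icc a b) := ⟨hx⟩
  have hGint : IntervalIntegrable G volume a x :=
    (hG.mono (uIcc_of_le hx.1 ▸ Icc_subset_Icc_right hx.2)).intervalIntegrable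
  exact ((integral_hasDerivWithinAt_right hGint
    (hG.stronglyMeasurableAtFilter_nhdsWithin measurableSet_Icc x) (hG x hx)).const_add _).congr
    hprim (hprim x hx)

theorem iteratedDerivWithin_tsum_Icc (hab : a < b) {l : ℕ} {f : ι → ℝ → ℝ} {u : ℕ → ι → ℝ}
    (hf : ∀ n, ContDiffOn ℝ l (f n) (Icc a b)) (hu : ∀ j ≤ l, Summable (u j))
    (hfu : ∀ j ≤ l, ∀ n, ∀ x ∈ Icc a b, ‖iteratedDerivWithin j (f n) (Icc a b) x‖ ≤ u j n)
    {x : ℝ} (hx : x ∈ Icc a b) :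
    iteratedDerivWithin l (fun y => ∑' n, f n y) (Icc a b) x =
      ∑' n, iteratedDerivWithin l (f n) (Icc a b) x := by
  induction l generalizing f u x with
  | zero => simp
  | succ l ih =>
    have hderiv : EqOn (derivWithin (fun y => ∑' n, f n y) (Icc a b))
        (fun y => ∑' n, derivWithin (f n) (Icc a b) y) (Icc a b) := fun y hy =>
      (hasDerivWithinAt_tsum_Icc hab (fun n => (hf n).of_le (by norm_cast; omega))
        (fun j hj => hu j (by omega)) (fun j hj => hfu j (by omega)) hy).derivWithin
        (uniqueDiffOn_Icc hab y hy)
    rw [iteratedDerivWithin_succ', iteratedDerivWithin_congr hderiv hx]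
    simp only [iteratedDerivWithin_succ']
    exact ih (fun n => (hf n).derivWithin (uniqueDiffOn_Icc hab) (by norm_cast))
      (fun j hj => hu (j + 1) (by omega))
      (fun j hj n y hy => by
        simpa only [← iteratedDerivWithin_succ'] using hfu (j + 1) (by omega) n y hy) hx

theorem contDiffOn_tsum_Icc (hab : a < b) {l : ℕ} {f : ι → ℝ → ℝ} {u : ℕ → ι → ℝ}
    (hf : ∀ n, ContDiffOn ℝ l (f n) (Icc a b)) (hu : ∀ j ≤ l, Summable (u j))
    (hfu : ∀ j ≤ l, ∀ n, ∀ x ∈ Icc a b, ‖iteratedDerivWithin j (f n) (Icc a b) x‖ ≤ u j n) :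
    ContDiffOn ℝ l (fun x => ∑' n, f n x) (Icc a b) := by
  induction l generalizing f u with
  | zero =>
    simpa using continuousOn_tsum (fun n => (hf n).continuousOn) (hu 0 le_rfl)
      (fun n x hx => by simpa using hfu 0 le_rfl n x hx)
  | succ l ih =>
    have hderiv : ∀ y ∈ Icc a b, HasDerivWithinAt (fun y => ∑' n, f n y)
        (∑' n, derivWithin (f n) (Icc a b) y) (Icc a b) y := fun y hy =>
      hasDerivWithinAt_tsum_Icc hab (fun n => (hf n).of_le (by norm_cast; omega))
        (fun j hj => hu j (by omega)) (fun j hj => hfu j (by omega)) hy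
    rw [Nat.cast_succ, contDiffOn_succ_iff_derivWithin (uniqueDiffOn_Icc hab)]
    refine ⟨fun y hy => (hderiv y hy).differentiableWithinAt, by simp, ?_⟩
    refine (ih (fun n => (hf n).derivWithin (uniqueDiffOn_Icc hab) (by norm_cast))
      (fun j hj => hu (j + 1) (by omega))
      (fun j hj n y hy => by
        simpa only [← iteratedDerivWithin_succ'] using hfu (j + 1) (by omega) n y hy)).congr
      fun y hy => (hderiv y hy).derivWithin (uniqueDiffOn_Icc hab y hy)

end SeriesOnIcc

theorem abs_tsum_le_of_abs_le_geometric {f : ℕ → ℝ} {C r : ℝ} (hr0 : 0 ≤ r) (hr1 : r < 1)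
    (hf : ∀ n, |f n| ≤ C * r ^ n) : |∑' n, f n| ≤ C / (1 - r) := by
  simpa [div_eq_mul_inv] using
    tsum_of_norm_bounded ((hasSum_geometric_of_lt_one hr0 hr1).mul_left C) fun n =>
      (Real.norm_eq_abs (f n)).trans_le (hf n)

section HomologicalOperator

variable {d : ℕ} {A : Torus d → Torus d} {lam : Torus d → ℝ} {q D : ℝ}

def homOpTerm (A : Torus d → Torus d) (lam : Torus d → ℝ) (h : Torus d → ℝ → ℝ) (b : Torus d)
    (n : ℕ) (x : ℝ) : ℝ :=
  Pfun A lam n b * h (A^[n] b) (PiProd A lam n b * x)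

theorem homOp_eq_neg_tsum (h : Torus d → ℝ → ℝ) (b : Torus d) :
    homOp A lam h b = fun x => -∑' n, homOpTerm A lam h b n x :=
  rfl

theorem lam_pos (hD : 0 < D) (hlam : ∀ b, 1 / D ≤ lam b) (b : Torus d) : 0 < lam b :=
  (one_div_pos.2 hD).trans_le (hlam b)

theorem lam_mem_unitInterval (hD : 0 < D) (hlam : ∀ b, 1 / D ≤ lam b ∧ lam b ≤ q) (hq : q ≤ 1)
    (b : Torus d) : lam b ∈ unitInterval :=
  ⟨(lam_pos hD (fun c => (hlam c).1) b).le, (hlam b).2.trans hq⟩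

theorem q_nonneg (hD : 0 < D) (hlam : ∀ b : Torus d, 1 / D ≤ lam b ∧ lam b ≤ q) : 0 ≤ q :=
  (lam_pos hD (fun c => (hlam c).1) 0).le.trans (hlam 0).2

theorem PiProd_pos (hlam : ∀ b, 0 < lam b) (n : ℕ) (b : Torus d) : 0 < PiProd A lam n b :=
  Finset.prod_pos fun _ _ => hlam _

theorem Pfun_nonneg (hlam : ∀ b, 0 < lam b) (n : ℕ) (b : Torus d) : 0 ≤ Pfun A lam n b :=
  div_nonneg (PiProd_pos hlam n b).le (hlam _).le

theorem PiProd_mem_unitInterval (hlam : ∀ b, lam b ∈ unitInterval) (n : ℕ) (b : Torus d) :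
    PiProd A lam n b ∈ unitInterval :=
  Finset.prod_induction _ (· ∈ unitInterval) (fun _ _ => unitInterval.mul_mem) unitInterval.one_mem
    fun _ _ => hlam _

theorem PiProd_le_pow (hlam : ∀ b, 0 ≤ lam b ∧ lam b ≤ q) (n : ℕ) (b : Torus d) :
    PiProd A lam n b ≤ q ^ n := by
  simpa [PiProd] using Finset.prod_le_prod (s := Finset.range n) (fun k _ => (hlam (A^[k] b)).1)
    fun k _ => (hlam (A^[k] b)).2

theorem Pfun_mul_PiProd_pow_le (hD : 0 < D) (hlam : ∀ b, 1 / D ≤ lam b ∧ lam b ≤ q)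
    (n j : ℕ) (b : Torus d) :
    Pfun A lam n b * PiProd A lam n b ^ j ≤ D * (q ^ (j + 1)) ^ n := by
  have hpos : ∀ c, 0 < lam c := lam_pos hD fun c => (hlam c).1
  have hPi : PiProd A lam n b ≤ q ^ n :=
    PiProd_le_pow (fun c => ⟨(hpos c).le, (hlam c).2⟩) n b
  have hPi0 : 0 ≤ PiProd A lam n b := (PiProd_pos hpos n b).le
  have hinv : 1 / lam (A^[n] b) ≤ D := (one_div_le (hpos _) hD).2 (hlam _).1
  calc Pfun A lam n b * PiProd A lam n b ^ j
      = PiProd A lam n b ^ (j + 1) * (1 / lam (A^[n] b)) := by rw [Pfun]; ring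
    _ ≤ (q ^ n) ^ (j + 1) * D :=
      mul_le_mul (pow_le_pow_left₀ hPi0 hPi _) hinv (one_div_pos.2 (hpos _)).le
        (pow_nonneg (hPi0.trans hPi) _)
    _ = D * (q ^ (j + 1)) ^ n := by ring

theorem abs_Pfun_mul_PiProd_pow_mul_le (hD : 0 < D) (hlam : ∀ b, 1 / D ≤ lam b ∧ lam b ≤ q)
    {v H : ℝ} (hv : |v| ≤ H) (n j : ℕ) (b : Torus d) :
    |Pfun A lam n b * PiProd A lam n b ^ j * v| ≤ D * H * (q ^ (j + 1)) ^ n := by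
  have hpos : ∀ c, 0 < lam c := lam_pos hD fun c => (hlam c).1
  have hP : 0 ≤ Pfun A lam n b * PiProd A lam n b ^ j :=
    mul_nonneg (Pfun_nonneg hpos n b) (pow_nonneg (PiProd_pos hpos n b).le j)
  rw [abs_mul, abs_of_nonneg hP]
  calc Pfun A lam n b * PiProd A lam n b ^ j * |v| ≤ D * (q ^ (j + 1)) ^ n * H :=
        mul_le_mul (Pfun_mul_PiProd_pow_le hD hlam n j b) hv (abs_nonneg v)
          (hP.trans (Pfun_mul_PiProd_pow_le hD hlam n j b))
    _ = D * H * (q ^ (j + 1)) ^ n := by ring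

theorem mapsTo_PiProd_mul (hlam : ∀ b, lam b ∈ unitInterval) (n : ℕ) (b : Torus d) :
    MapsTo (PiProd A lam n b * ·) (Icc 0 1) (Icc 0 1) := fun _ hx =>
  unitInterval.mul_mem (PiProd_mem_unitInterval hlam n b) hx

theorem contDiffOn_homOpTerm (hlam : ∀ b, lam b ∈ unitInterval) {h : Torus d → ℝ → ℝ}
    {l : ℕ} {n : ℕ} {b : Torus d} (hh : ContDiffOn ℝ l (h (A^[n] b)) (Icc 0 1)) :
    ContDiffOn ℝ l (homOpTerm A lam h b n) (Icc 0 1) :=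
  contDiffOn_const.mul (hh.comp (contDiffOn_const.mul contDiffOn_id) (mapsTo_PiProd_mul hlam n b))

theorem iteratedDerivWithin_homOpTerm (hlam : ∀ b, lam b ∈ unitInterval) {h : Torus d → ℝ → ℝ}
    {j : ℕ} {n : ℕ} {b : Torus d} (hh : ContDiffOn ℝ j (h (A^[n] b)) (Icc 0 1))
    {x : ℝ} (hx : x ∈ Icc 0 1) :
    iteratedDerivWithin j (homOpTerm A lam h b n) (Icc 0 1) x =
      Pfun A lam n b * PiProd A lam n b ^ j *
        iteratedDerivWithin j (h (A^[n] b)) (Icc 0 1) (PiProd A lam n b * x) := by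
  have hU := uniqueDiffOn_Icc zero_lt_one
  have hcomp : ContDiffOn ℝ j (fun y => h (A^[n] b) (PiProd A lam n b * y)) (Icc 0 1) :=
    hh.comp (contDiffOn_const.mul contDiffOn_id) (mapsTo_PiProd_mul hlam n b)
  unfold homOpTerm
  rw [iteratedDerivWithin_const_mul hx hU _ (hcomp x hx),
    iteratedDerivWithin_comp_const_smul hx hU hh _ (mapsTo_PiProd_mul hlam n b), smul_eq_mul,
    mul_assoc]

theorem summable_homOpTerm (hD : 0 < D) (hlam : ∀ b, 1 / D ≤ lam b ∧ lam b ≤ q) (hq : q < 1)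
    {h : Torus d → ℝ → ℝ} {H0 : ℝ} (hbound : ∀ c, ∀ x ∈ Icc (0:ℝ) 1, |h c x| ≤ H0)
    (b : Torus d) {x : ℝ} (hx : x ∈ Icc 0 1) :
    Summable (homOpTerm A lam h b · x) := by
  have hlam01 : ∀ c, lam c ∈ unitInterval := lam_mem_unitInterval hD hlam hq.le
  refine ((summable_geometric_of_lt_one (q_nonneg hD hlam) (by simpa using hq)).mul_left
    (D * H0)).of_norm_bounded fun n => ?_
  simpa [homOpTerm] using abs_Pfun_mul_PiProd_pow_mul_le hD hlam
    (hbound _ _ (mapsTo_PiProd_mul hlam01 n b hx)) n 0 b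

theorem abs_homOp_sub_le (hD : 0 < D) (hlam : ∀ b, 1 / D ≤ lam b ∧ lam b ≤ q) (hq : q < 1)
    {h : Torus d → ℝ → ℝ} {H0 : ℝ} (hbound : ∀ c, ∀ x ∈ Icc (0:ℝ) 1, |h c x| ≤ H0)
    {Lh : ℝ} (hLh : 0 ≤ Lh)
    (hLip : ∀ c, ∀ x ∈ Icc (0:ℝ) 1, ∀ y ∈ Icc (0:ℝ) 1, |h c x - h c y| ≤ Lh * |x - y|)
    (b : Torus d) {x y : ℝ} (hx : x ∈ Icc 0 1) (hy : y ∈ Icc 0 1) :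
    |homOp A lam h b x - homOp A lam h b y| ≤ D / (1 - q ^ 2) * Lh * |x - y| := by
  have hlam01 : ∀ c, lam c ∈ unitInterval := lam_mem_unitInterval hD hlam hq.le
  have hq0 := q_nonneg hD hlam
  have hpos := lam_pos hD fun c => (hlam c).1
  have hterm : ∀ n, |homOpTerm A lam h b n y - homOpTerm A lam h b n x| ≤
      D * Lh * |x - y| * (q ^ 2) ^ n := by
    intro n
    have hP := Pfun_nonneg (A := A) hpos n b
    have hdiff : |h (A^[n] b) (PiProd A lam n b * y) - h (A^[n] b) (PiProd A lam n b * x)| ≤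
        PiProd A lam n b * (Lh * |x - y|) := by
      refine (hLip _ _ (mapsTo_PiProd_mul hlam01 n b hy) _ (mapsTo_PiProd_mul hlam01 n b hx)).trans
        (le_of_eq ?_)
      rw [← mul_sub, abs_mul, abs_of_pos (PiProd_pos hpos n b), abs_sub_comm]
      ring
    calc |homOpTerm A lam h b n y - homOpTerm A lam h b n x|
        = Pfun A lam n b * |h (A^[n] b) (PiProd A lam n b * y) -
            h (A^[n] b) (PiProd A lam n b * x)| := by
          rw [homOpTerm, homOpTerm, ← mul_sub, abs_mul, abs_of_nonneg hP]
      _ ≤ Pfun A lam n b * PiProd A lam n b ^ 1 * (Lh * |x - y|) := by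
          rw [pow_one, mul_assoc]; exact mul_le_mul_of_nonneg_left hdiff hP
      _ ≤ D * (q ^ (1 + 1)) ^ n * (Lh * |x - y|) :=
          mul_le_mul_of_nonneg_right (Pfun_mul_PiProd_pow_le hD hlam n 1 b)
            (mul_nonneg hLh (abs_nonneg _))
      _ = D * Lh * |x - y| * (q ^ 2) ^ n := by ring
  simp only [homOp_eq_neg_tsum]
  rw [neg_sub_neg, ← (summable_homOpTerm hD hlam hq hbound b hy).tsum_sub
    (summable_homOpTerm hD hlam hq hbound b hx)]
  refine (abs_tsum_le_of_abs_le_geometric (pow_nonneg hq0 2) (pow_lt_one₀ hq0 hq two_ne_zero)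
    hterm).trans (le_of_eq ?_)
  ring

theorem abs_iteratedDerivWithin_homOpTerm_le (hD : 0 < D) (hlam : ∀ b, 1 / D ≤ lam b ∧ lam b ≤ q)
    (hq : q ≤ 1) {h : Torus d → ℝ → ℝ} {j : ℕ} {H : ℝ}
    (hh : ∀ c, ContDiffOn ℝ j (h c) (Icc 0 1))
    (hH : ∀ c, ∀ x ∈ Icc (0:ℝ) 1, |iteratedDerivWithin j (h c) (Icc 0 1) x| ≤ H)
    (n : ℕ) (b : Torus d) {x : ℝ} (hx : x ∈ Icc 0 1) :
    |iteratedDerivWithin j (homOpTerm A lam h b n) (Icc 0 1) x| ≤ D * H * (q ^ (j + 1)) ^ n := by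
  have hlam01 : ∀ c, lam c ∈ unitInterval := lam_mem_unitInterval hD hlam hq
  rw [iteratedDerivWithin_homOpTerm hlam01 (hh _) hx]
  exact abs_Pfun_mul_PiProd_pow_mul_le hD hlam (hH _ _ (mapsTo_PiProd_mul hlam01 n b hx)) n j b

section Smoothness

variable {h : Torus d → ℝ → ℝ} {l : ℕ} {Hd : ℕ → ℝ}

theorem contDiffOn_homOp (hD : 0 < D) (hlam : ∀ b, 1 / D ≤ lam b ∧ lam b ≤ q) (hq : q < 1)
    (hh : ∀ c, ContDiffOn ℝ l (h c) (Icc 0 1))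
    (hHd : ∀ j ≤ l, ∀ c, ∀ x ∈ Icc (0:ℝ) 1, |iteratedDerivWithin j (h c) (Icc 0 1) x| ≤ Hd j)
    (b : Torus d) : ContDiffOn ℝ l (homOp A lam h b) (Icc 0 1) := by
  have hq0 := q_nonneg hD hlam
  refine (contDiffOn_tsum_Icc zero_lt_one (u := fun j n => D * Hd j * (q ^ (j + 1)) ^ n)
    (fun n => contDiffOn_homOpTerm (lam_mem_unitInterval hD hlam hq.le) (hh _))
    (fun j _ => (summable_geometric_of_lt_one (pow_nonneg hq0 _)
      (pow_lt_one₀ hq0 hq j.succ_ne_zero)).mul_left _)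
    fun j hj n x hx => abs_iteratedDerivWithin_homOpTerm_le hD hlam hq.le
      (fun c => (hh c).of_le (by exact_mod_cast hj)) (hHd j hj) n b hx).neg

theorem iteratedDerivWithin_homOp (hD : 0 < D) (hlam : ∀ b, 1 / D ≤ lam b ∧ lam b ≤ q)
    (hq : q < 1) (hh : ∀ c, ContDiffOn ℝ l (h c) (Icc 0 1))
    (hHd : ∀ j ≤ l, ∀ c, ∀ x ∈ Icc (0:ℝ) 1, |iteratedDerivWithin j (h c) (Icc 0 1) x| ≤ Hd j)
    (b : Torus d) {x : ℝ} (hx : x ∈ Icc 0 1) :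
    iteratedDerivWithin l (homOp A lam h b) (Icc 0 1) x =
      -∑' n : ℕ, Pfun A lam n b * PiProd A lam n b ^ l *
        iteratedDerivWithin l (h (A^[n] b)) (Icc 0 1) (PiProd A lam n b * x) := by
  have hq0 := q_nonneg hD hlam
  rw [homOp_eq_neg_tsum, iteratedDerivWithin_fun_neg,
    iteratedDerivWithin_tsum_Icc zero_lt_one (u := fun j n => D * Hd j * (q ^ (j + 1)) ^ n)
    (fun n => contDiffOn_homOpTerm (lam_mem_unitInterval hD hlam hq.le) (hh _))
    (fun j _ => (summable_geometric_of_lt_one (pow_nonneg hq0 _)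
      (pow_lt_one₀ hq0 hq j.succ_ne_zero)).mul_left _)
    (fun j hj n x hx => abs_iteratedDerivWithin_homOpTerm_le hD hlam hq.le
      (fun c => (hh c).of_le (by exact_mod_cast hj)) (hHd j hj) n b hx) hx]
  exact congrArg _ (tsum_congr fun n =>
    iteratedDerivWithin_homOpTerm (lam_mem_unitInterval hD hlam hq.le) (hh _) hx)

theorem abs_iteratedDerivWithin_homOp_le (hD : 0 < D) (hlam : ∀ b, 1 / D ≤ lam b ∧ lam b ≤ q)
    (hq : q < 1) (hh : ∀ c, ContDiffOn ℝ l (h c) (Icc 0 1))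
    (hHd : ∀ j ≤ l, ∀ c, ∀ x ∈ Icc (0:ℝ) 1, |iteratedDerivWithin j (h c) (Icc 0 1) x| ≤ Hd j)
    (b : Torus d) {x : ℝ} (hx : x ∈ Icc 0 1) :
    |iteratedDerivWithin l (homOp A lam h b) (Icc 0 1) x| ≤ D / (1 - q ^ (l + 1)) * Hd l := by
  have hq0 := q_nonneg hD hlam
  rw [iteratedDerivWithin_homOp hD hlam hq hh hHd b hx, abs_neg]
  refine (abs_tsum_le_of_abs_le_geometric (C := D * Hd l) (r := q ^ (l + 1)) (pow_nonneg hq0 _)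
    (pow_lt_one₀ hq0 hq l.succ_ne_zero) fun n => ?_).trans (le_of_eq (by ring))
  rw [← iteratedDerivWithin_homOpTerm (lam_mem_unitInterval hD hlam hq.le) (hh _) hx]
  exact abs_iteratedDerivWithin_homOpTerm_le hD hlam hq.le hh (hHd l le_rfl) n b hx

end Smoothness

end HomologicalOperator

theorem statement14_general {d : ℕ}
    (A : Torus d → Torus d)
    (lam : Torus d → ℝ)
    (q D : ℝ) (hq : q < 1) (hD : 1 ≤ D)
    (hlam : ∀ b, 1 / D ≤ lam b ∧ lam b ≤ q)
    (h : Torus d → ℝ → ℝ)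
    (H0 : ℝ) (hbound : ∀ b : Torus d, ∀ x ∈ Icc (0:ℝ) 1, |h b x| ≤ H0) :
    (∀ Lh : ℝ, 0 ≤ Lh →
      (∀ b : Torus d, ∀ x ∈ Icc (0:ℝ) 1, ∀ y ∈ Icc (0:ℝ) 1, |h b x - h b y| ≤ Lh * |x - y|) →
      ∀ b : Torus d, ∀ x ∈ Icc (0:ℝ) 1, ∀ y ∈ Icc (0:ℝ) 1,
        |homOp A lam h b x - homOp A lam h b y| ≤ D / (1 - q ^ 2) * Lh * |x - y|) ∧
    (∀ l : ℕ,
      (∀ b, ContDiffOn ℝ l (h b) (Icc 0 1)) →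
      ∀ Hd : ℕ → ℝ,
        (∀ j : ℕ, j ≤ l → ∀ b : Torus d, ∀ x ∈ Icc (0:ℝ) 1,
          |iteratedDerivWithin j (h b) (Icc 0 1) x| ≤ Hd j) →
        (∀ b, ContDiffOn ℝ l (homOp A lam h b) (Icc 0 1)) ∧
        (∀ b : Torus d, ∀ x ∈ Icc (0:ℝ) 1,
          iteratedDerivWithin l (homOp A lam h b) (Icc 0 1) x =
            -∑' n : ℕ, Pfun A lam n b * PiProd A lam n b ^ l *
              iteratedDerivWithin l (h (A^[n] b)) (Icc 0 1) (PiProd A lam n b * x)) ∧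
        (∀ b : Torus d, ∀ x ∈ Icc (0:ℝ) 1,
          |iteratedDerivWithin l (homOp A lam h b) (Icc 0 1) x| ≤
            D / (1 - q ^ (l + 1)) * Hd l)) := by
  have hD0 : 0 < D := one_pos.trans_le hD
  refine ⟨fun Lh hLh hLip b x hx y hy => abs_homOp_sub_le hD0 hlam hq hbound hLh hLip b hx hy,
    fun l hh Hd hHd => ⟨contDiffOn_homOp hD0 hlam hq hh hHd,
      fun b x hx => iteratedDerivWithin_homOp hD0 hlam hq hh hHd b hx,
      fun b x hx => abs_iteratedDerivWithin_homOp_le hD0 hlam hq hh hHd b hx⟩⟩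

/-- the normalized homological operator is bounded in the fiberwise Lipschitz
seminorm, `Lip_x(Lh) ≤ (D/(1−q²)) Lip_x h`; moreover it preserves fiberwise `C^l` smoothness,
with `(Lh)^{(l)}(b,x) = −Σ_n P_n(b) Π_n(b)^l h^{(l)}(F₀^n(b,x))` and
`‖(Lh)^{(l)}‖_C ≤ (D/(1−q^{l+1})) ‖h^{(l)}‖_C`. -/
theorem statement14 {d : ℕ} (M : Matrix (Fin d) (Fin d) ℤ) (hM : IsHyperbolic M)
    (A : Torus d → Torus d) (hAdef : A = inducedMap M)
    (lam : Torus d → ℝ) (hlamc : Continuous lam)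
    (q D : ℝ) (hq : q < 1) (hD : 1 ≤ D)
    (hlam : ∀ b, 1 / D ≤ lam b ∧ lam b ≤ q)
    (h : Torus d → ℝ → ℝ)
    (H0 : ℝ) (hbound : ∀ b : Torus d, ∀ x ∈ Icc (0:ℝ) 1, |h b x| ≤ H0) :
    (∀ Lh : ℝ, 0 ≤ Lh →
      (∀ b : Torus d, ∀ x ∈ Icc (0:ℝ) 1, ∀ y ∈ Icc (0:ℝ) 1, |h b x - h b y| ≤ Lh * |x - y|) →
      ∀ b : Torus d, ∀ x ∈ Icc (0:ℝ) 1, ∀ y ∈ Icc (0:ℝ) 1,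
        |homOp A lam h b x - homOp A lam h b y| ≤ D / (1 - q ^ 2) * Lh * |x - y|) ∧
    (∀ l : ℕ,
      (∀ b, ContDiffOn ℝ l (h b) (Icc 0 1)) →
      ∀ Hd : ℕ → ℝ,
        (∀ j : ℕ, j ≤ l → ∀ b : Torus d, ∀ x ∈ Icc (0:ℝ) 1,
          |iteratedDerivWithin j (h b) (Icc 0 1) x| ≤ Hd j) →
        (∀ b, ContDiffOn ℝ l (homOp A lam h b) (Icc 0 1)) ∧
        (∀ b : Torus d, ∀ x ∈ Icc (0:ℝ) 1,
          iteratedDerivWithin l (homOp A lam h b) (Icc 0 1) x =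
            -∑' n : ℕ, Pfun A lam n b * PiProd A lam n b ^ l *
              iteratedDerivWithin l (h (A^[n] b)) (Icc 0 1) (PiProd A lam n b * x)) ∧
        (∀ b : Torus d, ∀ x ∈ Icc (0:ℝ) 1,
          |iteratedDerivWithin l (homOp A lam h b) (Icc 0 1) x| ≤
            D / (1 - q ^ (l + 1)) * Hd l)) :=
  statement14_general A lam q D hq hD hlam h H0 hbound
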